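/- arXiv:1507.01994 — 2 statements merged into one kernel-verified Lean document; each statement's English description precedes it below -/
import Mathlib

section
/- For every nonnegative integer K and every integer 0 ≤ k ≤ K, the k-order network distance d_N^k is a pseudometric on the space of K-order networks modulo k-isomorphism: for all K-order networks N_X, N_Y, N_Z it satisfies (i) d_N^k(N_X,N_Y) ≥ 0, (ii) d_N^k(N_X,N_Y) = d_N^k(N_Y,N_X), (iii) if N_X and N_Y are k-isomorphic then d_N^k(N_X,N_Y) = 0, and (iv) d_N^k(N_X,N_Y) ≤ d_N^k(N_X,N_Z) + d_N^k(N_Z,N_Y). -/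
open scoped ENNReal

/-- A correspondence between node sets `X` and `Y`: a set of pairs in which every
`x : X` and every `y : Y` appears. -/
def IsCorrespondence {X Y : Type} (C : Set (X × Y)) : Prop :=
  (∀ x : X, ∃ y : Y, (x, y) ∈ C) ∧ (∀ y : Y, ∃ x : X, (x, y) ∈ C)

/-- The rank of a tuple: the number of distinct elements appearing in it. -/
noncomputable def tupleRank {X : Type} {n : ℕ} (t : Fin n → X) : ℕ :=
  Set.ncard (Set.range t)

/-- A `K`-order network on a finite nonempty node set `X`: relationship functions
`r k : X^{k+1} → [0,1]` for `0 ≤ k ≤ K`, symmetric under permutations of the arguments,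
and such that any subtuple with the same set of distinct elements as the full tuple
carries the same relationship value. -/
structure HONetwork (K : ℕ) (X : Type) [Fintype X] [Nonempty X] : Type where
  r : ∀ k : ℕ, (Fin (k + 1) → X) → ℝ
  r_nonneg : ∀ k, k ≤ K → ∀ t : Fin (k + 1) → X, 0 ≤ r k t
  r_le_one : ∀ k, k ≤ K → ∀ t : Fin (k + 1) → X, r k t ≤ 1
  symm : ∀ k, k ≤ K → ∀ (t : Fin (k + 1) → X) (σ : Equiv.Perm (Fin (k + 1))),
    r k (t ∘ σ) = r k t
  identity : ∀ k, k ≤ K → ∀ k', k' ≤ K → ∀ (t : Fin (k + 1) → X)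
    (ι : Fin (k' + 1) → Fin (k + 1)), StrictMono ι →
    Set.range (t ∘ ι) = Set.range t → r k' (t ∘ ι) = r k t

/-- The `k`-order network difference `Γ^k_{X,Y}(C)`: the largest value of
`|r_X^k(x_{0:k}) − r_Y^k(y_{0:k})|` over tuples of pairs of correspondents in `C`. -/
noncomputable def Gamma {K : ℕ} {X Y : Type} [Fintype X] [Nonempty X] [Fintype Y] [Nonempty Y]
    (NX : HONetwork K X) (NY : HONetwork K Y) (k : ℕ) (C : Set (X × Y)) : ℝ :=
  sSup { v : ℝ | ∃ (tx : Fin (k + 1) → X) (ty : Fin (k + 1) → Y),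
    (∀ i, (tx i, ty i) ∈ C) ∧ v = |NX.r k tx - NY.r k ty| }

/-- The `k`-order network distance: minimum of `Γ^k_{X,Y}(C)` over correspondences `C`. -/
noncomputable def dN {K : ℕ} {X Y : Type} [Fintype X] [Nonempty X] [Fintype Y] [Nonempty Y]
    (k : ℕ) (NX : HONetwork K X) (NY : HONetwork K Y) : ℝ :=
  sInf { v : ℝ | ∃ C : Set (X × Y), IsCorrespondence C ∧ v = Gamma NX NY k C }

/-- The `p`-norm of a vector in `ℝ^{K+1}`, `1 ≤ p ≤ ∞`. -/
noncomputable def pNorm (K : ℕ) (p : ℝ≥0∞) [Fact (1 ≤ p)] (v : Fin (K + 1) → ℝ) : ℝ :=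
  ‖(WithLp.equiv p (Fin (K + 1) → ℝ)).symm v‖

/-- The `p`-norm network distance: minimum over correspondences `C` of the `p`-norm of the
vector `(Γ^0_{X,Y}(C), …, Γ^K_{X,Y}(C))`. -/
noncomputable def dNp {K : ℕ} {X Y : Type} [Fintype X] [Nonempty X] [Fintype Y] [Nonempty Y]
    (p : ℝ≥0∞) [Fact (1 ≤ p)] (NX : HONetwork K X) (NY : HONetwork K Y) : ℝ :=
  sInf { v : ℝ | ∃ C : Set (X × Y), IsCorrespondence C ∧
    v = pNorm K p (fun k : Fin (K + 1) => Gamma NX NY (k : ℕ) C) }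

/-- Two `K`-order networks are `k`-isomorphic if a bijection of the node sets preserves the
`k`-order relationship functions. -/
def kIsomorphic {K : ℕ} {X Y : Type} [Fintype X] [Nonempty X] [Fintype Y] [Nonempty Y]
    (k : ℕ) (NX : HONetwork K X) (NY : HONetwork K Y) : Prop :=
  ∃ φ : X ≃ Y, ∀ t : Fin (k + 1) → X, NY.r k (fun i => φ (t i)) = NX.r k t

/-- Two `K`-order networks are isomorphic if a bijection of the node sets preserves the
`k`-order relationship functions for all `0 ≤ k ≤ K`. -/
def Isomorphic {K : ℕ} {X Y : Type} [Fintype X] [Nonempty X] [Fintype Y] [Nonempty Y]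
    (NX : HONetwork K X) (NY : HONetwork K Y) : Prop :=
  ∃ φ : X ≃ Y, ∀ k, k ≤ K → ∀ t : Fin (k + 1) → X, NY.r k (fun i => φ (t i)) = NX.r k t

/-- A `K`-order dissimilarity network: a `K`-order network whose relationship functions
decompose as `r^k = d^k + ε · rank`, with nonnegative dissimilarity functions `d^k`
satisfying the order increasing property, and `0 < ε ≤ 1 − (1/K) · max d^K`. -/
structure DissimNetwork (K : ℕ) (X : Type) [Fintype X] [Nonempty X]
    extends HONetwork K X where
  dfun : ∀ k : ℕ, (Fin (k + 1) → X) → ℝ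
  eps : ℝ
  dfun_nonneg : ∀ k, k ≤ K → ∀ t : Fin (k + 1) → X, 0 ≤ dfun k t
  decomp : ∀ k, k ≤ K → ∀ t : Fin (k + 1) → X,
    r k t = dfun k t + eps * (tupleRank t : ℝ)
  order_incr : ∀ k : ℕ, k + 1 ≤ K → ∀ t : Fin (k + 2) → X,
    dfun k (fun i : Fin (k + 1) => t i.castSucc) ≤ dfun (k + 1) t
  eps_pos : 0 < eps
  eps_le : ∀ t : Fin (K + 1) → X, eps ≤ 1 - (1 / (K : ℝ)) * dfun K t

/-- A `K`-order proximity network: a `K`-order network whose relationship functions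
decompose as `r^k = p^k − ε · rank`, with nonnegative proximity functions `p^k`
satisfying the order decreasing property, and `0 < ε ≤ (1/K) · min p^K`. -/
structure ProxNetwork (K : ℕ) (X : Type) [Fintype X] [Nonempty X]
    extends HONetwork K X where
  pfun : ∀ k : ℕ, (Fin (k + 1) → X) → ℝ
  eps : ℝ
  pfun_nonneg : ∀ k, k ≤ K → ∀ t : Fin (k + 1) → X, 0 ≤ pfun k t
  decomp : ∀ k, k ≤ K → ∀ t : Fin (k + 1) → X,
    r k t = pfun k t - eps * (tupleRank t : ℝ)
  order_decr : ∀ k : ℕ, k + 1 ≤ K → ∀ t : Fin (k + 2) → X,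
    pfun (k + 1) t ≤ pfun k (fun i : Fin (k + 1) => t i.castSucc)
  eps_pos : 0 < eps
  eps_le : ∀ t : Fin (K + 1) → X, eps ≤ (1 / (K : ℝ)) * pfun K t

/-! The network difference of a correspondence is a maximum of finitely many values, and
correspondences compose as relations. The inverse relation realises the same difference with
`X` and `Y` exchanged, the graph of a `k`-isomorphism has difference `0`, and for a composite
`C ○ D` through `Z` each pair of correspondents factors through some node of `Z`, so
`Γ(C ○ D) ≤ Γ(C) + Γ(D)` by the triangle inequality in `ℝ`; passing to infima gives the axioms
of a pseudometric. -/

open SetRel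

namespace IsCorrespondence

variable {X Y Z : Type} {C : Set (X × Y)} {D : Set (Y × Z)}

lemma univ [Nonempty X] [Nonempty Y] : IsCorrespondence (Set.univ : Set (X × Y)) :=
  ⟨fun _ => ⟨Classical.arbitrary Y, trivial⟩, fun _ => ⟨Classical.arbitrary X, trivial⟩⟩

lemma inv (hC : IsCorrespondence C) : IsCorrespondence (SetRel.inv C) :=
  ⟨hC.2, hC.1⟩

lemma comp (hC : IsCorrespondence C) (hD : IsCorrespondence D) : IsCorrespondence (C ○ D) := by
  constructor
  · intro x
    obtain ⟨y, hxy⟩ := hC.1 x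
    obtain ⟨z, hyz⟩ := hD.1 y
    exact ⟨z, y, hxy, hyz⟩
  · intro z
    obtain ⟨y, hyz⟩ := hD.2 z
    obtain ⟨x, hxy⟩ := hC.2 y
    exact ⟨x, y, hxy, hyz⟩

lemma graph_equiv (φ : X ≃ Y) : IsCorrespondence (Function.graph φ) :=
  ⟨fun x => ⟨φ x, rfl⟩, fun y => ⟨φ.symm y, φ.apply_symm_apply y⟩⟩

end IsCorrespondence

section Gamma

variable {K k : ℕ} {X Y Z : Type} [Fintype X] [Nonempty X] [Fintype Y] [Nonempty Y]
  [Fintype Z] [Nonempty Z] (NX : HONetwork K X) (NY : HONetwork K Y) (NZ : HONetwork K Z)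
  {C : Set (X × Y)}

lemma bddAbove_Gamma_set (C : Set (X × Y)) :
    BddAbove { v : ℝ | ∃ (tx : Fin (k + 1) → X) (ty : Fin (k + 1) → Y),
      (∀ i, (tx i, ty i) ∈ C) ∧ v = |NX.r k tx - NY.r k ty| } := by
  refine (Set.finite_range fun t : (Fin (k + 1) → X) × (Fin (k + 1) → Y) =>
    |NX.r k t.1 - NY.r k t.2|).bddAbove.mono ?_
  rintro v ⟨tx, ty, -, rfl⟩
  exact ⟨(tx, ty), rfl⟩

lemma abs_sub_le_Gamma {tx : Fin (k + 1) → X} {ty : Fin (k + 1) → Y}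
    (h : ∀ i, (tx i, ty i) ∈ C) : |NX.r k tx - NY.r k ty| ≤ Gamma NX NY k C :=
  le_csSup (bddAbove_Gamma_set NX NY C) ⟨tx, ty, h, rfl⟩

lemma Gamma_le {c : ℝ} (hc : 0 ≤ c)
    (h : ∀ (tx : Fin (k + 1) → X) (ty : Fin (k + 1) → Y), (∀ i, (tx i, ty i) ∈ C) →
      |NX.r k tx - NY.r k ty| ≤ c) :
    Gamma NX NY k C ≤ c := by
  refine Real.sSup_le ?_ hc
  rintro v ⟨tx, ty, hC, rfl⟩
  exact h tx ty hC

lemma Gamma_nonneg : 0 ≤ Gamma NX NY k C := by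
  refine Real.sSup_nonneg ?_
  rintro v ⟨tx, ty, -, rfl⟩
  exact abs_nonneg _

lemma Gamma_inv : Gamma NY NX k (SetRel.inv C) = Gamma NX NY k C :=
  le_antisymm
    (Gamma_le NY NX (Gamma_nonneg NX NY) fun ty tx h =>
      abs_sub_comm (NY.r k ty) (NX.r k tx) ▸ abs_sub_le_Gamma NX NY h)
    (Gamma_le NX NY (Gamma_nonneg NY NX) fun tx ty h =>
      abs_sub_comm (NX.r k tx) (NY.r k ty) ▸ abs_sub_le_Gamma NY NX (C := SetRel.inv C) h)

lemma Gamma_graph_eq_zero (φ : X → Y) (hφ : ∀ t : Fin (k + 1) → X, NY.r k (φ ∘ t) = NX.r k t) :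
    Gamma NX NY k (Function.graph φ) = 0 := by
  refine le_antisymm (Gamma_le NX NY le_rfl fun tx ty h => ?_) (Gamma_nonneg NX NY)
  obtain rfl : φ ∘ tx = ty := funext h
  rw [hφ, sub_self, abs_zero]

lemma Gamma_comp_le (C : Set (X × Z)) (D : Set (Z × Y)) :
    Gamma NX NY k (C ○ D) ≤ Gamma NX NZ k C + Gamma NZ NY k D := by
  refine Gamma_le NX NY (add_nonneg (Gamma_nonneg NX NZ) (Gamma_nonneg NZ NY)) fun tx ty h => ?_
  choose tz hC hD using h
  calc |NX.r k tx - NY.r k ty|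
      ≤ |NX.r k tx - NZ.r k tz| + |NZ.r k tz - NY.r k ty| := abs_sub_le _ _ _
    _ ≤ Gamma NX NZ k C + Gamma NZ NY k D :=
      add_le_add (abs_sub_le_Gamma NX NZ hC) (abs_sub_le_Gamma NZ NY hD)

end Gamma

section dN

variable {K k : ℕ} {X Y Z : Type} [Fintype X] [Nonempty X] [Fintype Y] [Nonempty Y]
  [Fintype Z] [Nonempty Z] (NX : HONetwork K X) (NY : HONetwork K Y) (NZ : HONetwork K Z)

lemma dN_le_Gamma {C : Set (X × Y)} (hC : IsCorrespondence C) :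
    dN k NX NY ≤ Gamma NX NY k C := by
  refine csInf_le ⟨0, ?_⟩ ⟨C, hC, rfl⟩
  rintro v ⟨D, -, rfl⟩
  exact Gamma_nonneg NX NY

lemma le_dN {c : ℝ} (h : ∀ C : Set (X × Y), IsCorrespondence C → c ≤ Gamma NX NY k C) :
    c ≤ dN k NX NY := by
  refine le_csInf ⟨_, Set.univ, IsCorrespondence.univ, rfl⟩ ?_
  rintro v ⟨C, hC, rfl⟩
  exact h C hC

lemma dN_nonneg : 0 ≤ dN k NX NY :=
  le_dN NX NY fun _ _ => Gamma_nonneg NX NY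

lemma dN_le_dN_swap : dN k NY NX ≤ dN k NX NY :=
  le_dN NX NY fun C hC => Gamma_inv NX NY (C := C) ▸ dN_le_Gamma NY NX (IsCorrespondence.inv hC)

lemma dN_comm : dN k NX NY = dN k NY NX :=
  le_antisymm (dN_le_dN_swap NY NX) (dN_le_dN_swap NX NY)

lemma dN_eq_zero_of_kIsomorphic (h : kIsomorphic k NX NY) : dN k NX NY = 0 := by
  obtain ⟨φ, hφ⟩ := h
  refine le_antisymm ?_ (dN_nonneg NX NY)
  calc dN k NX NY ≤ Gamma NX NY k (Function.graph φ) :=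
        dN_le_Gamma NX NY (IsCorrespondence.graph_equiv φ)
    _ = 0 := Gamma_graph_eq_zero NX NY φ hφ

lemma dN_triangle : dN k NX NY ≤ dN k NX NZ + dN k NZ NY := by
  rw [← sub_le_iff_le_add]
  refine le_dN NX NZ fun C hC => ?_
  rw [sub_le_comm]
  refine le_dN NZ NY fun D hD => ?_
  rw [sub_le_iff_le_add']
  exact (dN_le_Gamma NX NY (IsCorrespondence.comp hC hD)).trans (Gamma_comp_le NX NY NZ C D)

end dN

theorem dN_pseudometric_general (K k : ℕ)
    (X Y Z : Type) [Fintype X] [Nonempty X] [Fintype Y] [Nonempty Y] [Fintype Z] [Nonempty Z]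
    (NX : HONetwork K X) (NY : HONetwork K Y) (NZ : HONetwork K Z) :
    0 ≤ dN k NX NY ∧
    dN k NX NY = dN k NY NX ∧
    (kIsomorphic k NX NY → dN k NX NY = 0) ∧
    dN k NX NY ≤ dN k NX NZ + dN k NZ NY :=
  ⟨dN_nonneg NX NY, dN_comm NX NY, dN_eq_zero_of_kIsomorphic NX NY, dN_triangle NX NY NZ⟩

/-- For every `K` and every `0 ≤ k ≤ K`, the `k`-order network distance `d_N^k`
is a pseudometric on the space of `K`-order networks modulo `k`-isomorphism. -/
theorem dN_pseudometric (K k : ℕ) (hk : k ≤ K)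
    (X Y Z : Type) [Fintype X] [Nonempty X] [Fintype Y] [Nonempty Y] [Fintype Z] [Nonempty Z]
    (NX : HONetwork K X) (NY : HONetwork K Y) (NZ : HONetwork K Z) :
    0 ≤ dN k NX NY ∧
    dN k NX NY = dN k NY NX ∧
    (kIsomorphic k NX NY → dN k NX NY = 0) ∧
    dN k NX NY ≤ dN k NX NZ + dN k NZ NY :=
  dN_pseudometric_general K k X Y Z NX NY NZ
end

section
/- Let D_X and D_Y be K-order dissimilarity networks with K ≥ 1, let 1 ≤ k ≤ K, and let C be a correspondence between X and Y such that r_X^k(x_0,…,x_k) = r_Y^k(y_0,…,y_k) for all pairs (x_0,y_0),…,(x_k,y_k) ∈ C. Then any two nodes of X matched by C to a common node of Y must be equal: if (x,y) ∈ C and (x',y) ∈ C then x = x'. Consequently any function φ : X → Y with (x, φ(x)) ∈ C for all x ∈ X is injective. -/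
open scoped ENNReal

/-!
If distinct nodes `a ≠ b` of `X` are both matched to `y`, then the tuples `(a, b, …, b)` and
`(b, …, b)` are both matched to `(y, …, y)`, so `r_X^k` takes the same value on them. By the order
increasing property and the rank term, the first value is at least `r_X^0(a) + ε`, while the
identity property makes the second equal to `r_X^0(b)`. Exchanging `a` and `b` gives
`r_X^0(a) + ε ≤ r_X^0(b) ≤ r_X^0(a) - ε`, impossible since `ε > 0`.
-/

lemma tupleRank_const {X : Type} {n : ℕ} (a : X) :
    tupleRank (fun _ : Fin (n + 1) => a) = 1 := by
  simp [tupleRank, Set.range_const]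

lemma tupleRank_cons_const {X : Type} {n : ℕ} {a b : X} (hab : a ≠ b) :
    tupleRank (Fin.cons a (fun _ : Fin (n + 1) => b) : Fin (n + 2) → X) = 2 := by
  rw [tupleRank, Fin.range_cons, Set.range_const, Set.ncard_pair hab]

namespace HONetwork

variable {K : ℕ} {X : Type} [Fintype X] [Nonempty X]

lemma r_const (N : HONetwork K X) {k : ℕ} (hk : k ≤ K) (a : X) :
    N.r k (fun _ => a) = N.r 0 (fun _ => a) :=
  (N.identity k hk 0 (Nat.zero_le K) (fun _ => a) (fun _ => 0)
    (Subsingleton.strictMono (α := Fin 1) _) (by simp [Set.range_const])).symm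

end HONetwork

namespace DissimNetwork

variable {K : ℕ} {X : Type} [Fintype X] [Nonempty X]

lemma dfun_zero_le_dfun (D : DissimNetwork K X) {k : ℕ} (hk : k ≤ K) (t : Fin (k + 1) → X) :
    D.dfun 0 (fun _ => t 0) ≤ D.dfun k t := by
  induction k with
  | zero => exact le_of_eq (congrArg _ (funext fun i => congrArg t (Fin.fin_one_eq_zero i).symm))
  | succ k ih =>
    calc D.dfun 0 (fun _ => t 0)
        = D.dfun 0 (fun _ => t (Fin.castSucc 0)) := by rw [Fin.castSucc_zero]
      _ ≤ D.dfun k (fun i : Fin (k + 1) => t i.castSucc) := ih (by omega) (fun i => t i.castSucc)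
      _ ≤ D.dfun (k + 1) t := D.order_incr k hk t

lemma r_zero_add_eps_mul_le (D : DissimNetwork K X) {k : ℕ} (hk : k ≤ K)
    (t : Fin (k + 1) → X) :
    D.r 0 (fun _ => t 0) + D.eps * ((tupleRank t : ℝ) - 1) ≤ D.r k t := by
  rw [D.decomp 0 (Nat.zero_le K), D.decomp k hk, tupleRank_const]
  have := D.dfun_zero_le_dfun hk t
  push_cast
  linarith

lemma r_zero_add_eps_le_of_r_cons_const_eq (D : DissimNetwork K X) {m : ℕ} (hm : m + 1 ≤ K)
    {a b : X} (hab : a ≠ b)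
    (h : D.r (m + 1) (Fin.cons a fun _ => b) = D.r (m + 1) fun _ => b) :
    D.r 0 (fun _ => a) + D.eps ≤ D.r 0 (fun _ => b) := by
  have := D.r_zero_add_eps_mul_le hm (Fin.cons a fun _ => b)
  rw [tupleRank_cons_const hab, h, D.r_const hm] at this
  norm_num at this
  linarith

end DissimNetwork

theorem dissim_correspondence_injective_general (K k : ℕ) (hk1 : 1 ≤ k) (hk : k ≤ K)
    (X Y : Type) [Fintype X] [Nonempty X] [Fintype Y] [Nonempty Y]
    (DX : DissimNetwork K X) (DY : DissimNetwork K Y)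
    (C : Set (X × Y))
    (hmatch : ∀ (tx : Fin (k + 1) → X) (ty : Fin (k + 1) → Y),
      (∀ i, (tx i, ty i) ∈ C) → DX.r k tx = DY.r k ty) :
    (∀ (x x' : X) (y : Y), (x, y) ∈ C → (x', y) ∈ C → x = x') ∧
    ∀ φ : X → Y, (∀ x : X, (x, φ x) ∈ C) → Function.Injective φ := by
  obtain ⟨m, rfl⟩ : ∃ m, k = m + 1 := ⟨k - 1, by omega⟩
  have hgap : ∀ (a b : X) (y : Y), (a, y) ∈ C → (b, y) ∈ C → a ≠ b →
      DX.r 0 (fun _ => a) + DX.eps ≤ DX.r 0 (fun _ => b) := by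
    intro a b y ha hb hab
    have hcons := hmatch (Fin.cons a fun _ => b) (fun _ => y) (Fin.cases ha fun _ => hb)
    have hconst := hmatch (fun _ => b) (fun _ => y) fun _ => hb
    exact DX.r_zero_add_eps_le_of_r_cons_const_eq hk hab (hcons.trans hconst.symm)
  have hunique : ∀ (x x' : X) (y : Y), (x, y) ∈ C → (x', y) ∈ C → x = x' := by
    intro x x' y hx hx'
    by_contra hne
    linarith [hgap x x' y hx hx' hne, hgap x' x y hx' hx (Ne.symm hne), DX.eps_pos]
  exact ⟨hunique, fun φ hφ x x' hφx => hunique x x' (φ x) (hφ x) (hφx ▸ hφ x')⟩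

/-- for dissimilarity networks, if a correspondence `C` matches all `k`-order
relationship values exactly, then two nodes of `X` matched by `C` to a common node of `Y`
are equal; consequently any selection function `φ` with `(x, φ x) ∈ C` is injective. -/
theorem dissim_correspondence_injective (K k : ℕ) (hK : 1 ≤ K) (hk1 : 1 ≤ k) (hk : k ≤ K)
    (X Y : Type) [Fintype X] [Nonempty X] [Fintype Y] [Nonempty Y]
    (DX : DissimNetwork K X) (DY : DissimNetwork K Y)
    (C : Set (X × Y)) (hC : IsCorrespondence C)
    (hmatch : ∀ (tx : Fin (k + 1) → X) (ty : Fin (k + 1) → Y),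
      (∀ i, (tx i, ty i) ∈ C) → DX.r k tx = DY.r k ty) :
    (∀ (x x' : X) (y : Y), (x, y) ∈ C → (x', y) ∈ C → x = x') ∧
    ∀ φ : X → Y, (∀ x : X, (x, φ x) ∈ C) → Function.Injective φ :=
  dissim_correspondence_injective_general K k hk1 hk X Y DX DY C hmatch
end
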